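/- Let G be a bipartite simple graph and S a subset of its vertices. Then per(L_G[S] ∘ L_G[S]) ≤ per(L_G[S])², where L_G[S] is the principal submatrix of the Laplacian L_G indexed by S. -/

import Mathlib

open Matrix

/-- The Laplacian matrix of a simple graph, with real entries. -/
noncomputable def lap {V : Type*} [Fintype V] [DecidableEq V] (G : SimpleGraph V) :
    Matrix V V ℝ :=
  letI := Classical.decRel G.Adj
  G.lapMatrix ℝ

lemma lap_diag_nonneg {V : Type*} [Fintype V] [DecidableEq V] (G : SimpleGraph V) (x : V) :
    0 ≤ lap G x x := by
  classical
  simp [lap, SimpleGraph.lapMatrix, SimpleGraph.degMatrix, Matrix.sub_apply]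

lemma lap_off_adj {V : Type*} [Fintype V] [DecidableEq V] (G : SimpleGraph V) {x y : V}
    (h : x ≠ y) (hadj : G.Adj x y) : lap G x y = -1 := by
  classical
  simp [lap, SimpleGraph.lapMatrix, SimpleGraph.degMatrix, Matrix.sub_apply,
    Matrix.diagonal_apply_ne _ h, hadj]

lemma lap_off_nonadj {V : Type*} [Fintype V] [DecidableEq V] (G : SimpleGraph V) {x y : V}
    (h : x ≠ y) (hadj : ¬ G.Adj x y) : lap G x y = 0 := by
  classical
  simp [lap, SimpleGraph.lapMatrix, SimpleGraph.degMatrix, Matrix.sub_apply,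
    Matrix.diagonal_apply_ne _ h, hadj]

/-- If a permutation moves each non-fixed point to a point of different color (2 colors),
then the number of non-fixed points is even. -/
lemma even_card_support {α : Type*} [Fintype α] [DecidableEq α] (σ : Equiv.Perm α)
    (c : α → Fin 2) (hc : ∀ i, σ i ≠ i → c (σ i) ≠ c i) :
    Even (Finset.univ.filter fun i => σ i ≠ i).card := by
  classical
  set T : Finset α := Finset.univ.filter fun i => σ i ≠ i with hT
  have hmem : ∀ i, i ∈ T ↔ σ i ≠ i := by intro i; simp [hT]
  have hσT : ∀ i ∈ T, σ i ∈ T := by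
    intro i hi
    rw [hmem] at hi ⊢
    intro h
    exact hi (σ.injective h)
  set T0 : Finset α := T.filter fun i => c i = 0 with hT0
  set T1 : Finset α := T.filter fun i => c i ≠ 0 with hT1
  have hcard : T0.card = T1.card := by
    apply Finset.card_bij' (fun i _ => σ i) (fun j _ => σ⁻¹ j)
    · intro i hi
      rw [hT0, Finset.mem_filter] at hi
      rw [hT1, Finset.mem_filter]
      refine ⟨hσT i hi.1, ?_⟩
      have := hc i ((hmem i).mp hi.1)
      rw [hi.2] at this
      exact this
    · intro j hj
      rw [hT1, Finset.mem_filter] at hj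
      rw [hT0, Finset.mem_filter]
      have hj' : σ (σ⁻¹ j) ≠ σ⁻¹ j := by
        intro h
        rw [show σ (σ⁻¹ j) = j from σ.apply_symm_apply j] at h
        exact ((hmem j).mp hj.1)
          (by calc σ j = σ (σ⁻¹ j) := by rw [← h]
                _ = j := σ.apply_symm_apply j)
      refine ⟨(hmem _).mpr hj', ?_⟩
      have h2 := hc (σ⁻¹ j) hj'
      simp only [show σ (σ⁻¹ j) = j from σ.apply_symm_apply j] at h2
      have : ∀ a b : Fin 2, a ≠ b → a ≠ 0 → b = 0 := by decide
      exact this _ _ h2 hj.2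
    · intro i _; simp
    · intro j _; simp
  have hunion : T = T0 ∪ T1 := by
    rw [hT0, hT1, Finset.filter_union_filter_not_eq]
  have hdisj : Disjoint T0 T1 := by
    rw [hT0, hT1]
    exact Finset.disjoint_filter_filter_not T T _
  have : T.card = T0.card + T1.card := by
    rw [hunion, Finset.card_union_of_disjoint hdisj]
  rw [this, ← hcard]
  exact ⟨T0.card, rfl⟩

/-- For a bipartite graph `G` and a vertex subset `S`, the principal submatrix
`L_G[S]` of the Laplacian satisfies `per(L_G[S] ∘ L_G[S]) ≤ per(L_G[S])²`. -/
theorem permanent_hadamard_lap_principal_le_sq_of_bipartite {V : Type*} [Fintype V]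
    [DecidableEq V] (G : SimpleGraph V) (hbip : G.Colorable 2) (S : Finset V) :
    (Matrix.hadamard ((lap G).submatrix (Subtype.val : S → V) Subtype.val)
        ((lap G).submatrix (Subtype.val : S → V) Subtype.val)).permanent ≤
      ((lap G).submatrix (Subtype.val : S → V) Subtype.val).permanent ^ 2 := by
  classical
  obtain ⟨C⟩ := hbip
  set A : Matrix S S ℝ := (lap G).submatrix (Subtype.val : S → V) Subtype.val with hA
  -- each term of the permanent of A is nonnegative
  have key : ∀ σ : Equiv.Perm S, 0 ≤ ∏ i, A (σ i) i := by
    intro σ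
    by_cases hz : ∀ i : S, σ i = i ∨ G.Adj (σ i : V) (i : V)
    · rw [← Finset.prod_filter_mul_prod_filter_not Finset.univ (fun i => σ i ≠ i)]
      have h1 : ∏ i ∈ Finset.univ.filter (fun i => σ i ≠ i), A (σ i) i
          = (-1 : ℝ) ^ (Finset.univ.filter fun i : S => σ i ≠ i).card := by
        rw [← Finset.prod_const]
        refine Finset.prod_congr rfl fun i hi => ?_
        rw [Finset.mem_filter] at hi
        have hadj : G.Adj (σ i : V) (i : V) := (hz i).resolve_left hi.2
        have hne : ((σ i : S) : V) ≠ (i : V) := by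
          intro h
          exact hi.2 (Subtype.ext h)
        exact lap_off_adj G hne hadj
      have heven : Even (Finset.univ.filter fun i : S => σ i ≠ i).card := by
        refine even_card_support σ (fun i => C (i : V)) fun i hi => ?_
        exact C.valid ((hz i).resolve_left hi)
      rw [h1, heven.neg_one_pow, one_mul]
      refine Finset.prod_nonneg fun i hi => ?_
      rw [Finset.mem_filter, not_not] at hi
      rw [hi.2]
      exact lap_diag_nonneg G (i : V)
    · push_neg at hz
      obtain ⟨i, hi1, hi2⟩ := hz
      have hne : ((σ i : S) : V) ≠ (i : V) := fun h => hi1 (Subtype.ext h)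
      rw [Finset.prod_eq_zero (Finset.mem_univ i)
        (by exact lap_off_nonadj G hne hi2)]
  -- now conclude
  have hhad : (Matrix.hadamard A A).permanent = ∑ σ : Equiv.Perm S, (∏ i, A (σ i) i) ^ 2 := by
    unfold Matrix.permanent
    refine Finset.sum_congr rfl fun σ _ => ?_
    rw [← Finset.prod_pow]
    refine Finset.prod_congr rfl fun i _ => ?_
    simp [Matrix.hadamard_apply, sq]
  rw [hhad]
  unfold Matrix.permanent
  exact Finset.sum_sq_le_sq_sum_of_nonneg fun σ _ => key σ
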